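/- Let Γ be a simplicial graph with vertex set Λ, let M be the right-angled Coxeter matrix with m_{s,t} = 2 when s and t are adjacent in Γ and m_{s,t} = ∞ otherwise, and let A_M be the corresponding right-angled Artin group with Artin monoid A_M^+. Then the canonical monoid homomorphism identifies A_M^+ with the positive cone of A_M (the submonoid of A_M generated by Λ), and the pair (A_M, A_M^+) is a quasi-lattice ordered group. -/

import Mathlib

section Order

variable {H : Type*} [Group H]

/-- `x ≤ y` in the left-invariant partial order determined by the cone `P`. -/
def lle (P : Submonoid H) (x y : H) : Prop := x⁻¹ * y ∈ P

/-- `x ≤ᵣ y` in the right-invariant partial order determined by the cone `P`. -/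
def rle (P : Submonoid H) (x y : H) : Prop := y * x⁻¹ ∈ P

/-- `x` and `y` have a common upper bound for the left-invariant order. -/
def HasUB (P : Submonoid H) (x y : H) : Prop := ∃ z, lle P x z ∧ lle P y z

/-- `m` is a least upper bound of `x` and `y` for the left-invariant order. -/
def IsLub' (P : Submonoid H) (x y m : H) : Prop :=
  lle P x m ∧ lle P y m ∧ ∀ w, lle P x w → lle P y w → lle P m w

/-- `w` is a greatest lower bound of `u` and `v` for the right-invariant order
(greatest among *all* common right lower bounds in the group). -/
def IsRGlb (P : Submonoid H) (u v w : H) : Prop :=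
  rle P w u ∧ rle P w v ∧ ∀ z, rle P z u → rle P z v → rle P z w

/-- `(H,P)` is a partially ordered group: `P ∩ P⁻¹ = {1}`. -/
def IsPoGroup (P : Submonoid H) : Prop := ∀ x : H, x ∈ P → x⁻¹ ∈ P → x = 1

/-- `(H,P)` is a quasi-lattice ordered group: it is a partially ordered group in which
every pair of elements with a common upper bound has a least upper bound. -/
def IsQLO (P : Submonoid H) : Prop :=
  IsPoGroup P ∧ ∀ x y : H, HasUB P x y → ∃ m, IsLub' P x y m

end Order

variable {Λ : Type*}

/-- The defining relators of the right-angled Artin group attached to the graph `adj`: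
commutators of the generators at adjacent vertices. -/
def RaagRels (adj : Λ → Λ → Prop) : Set (FreeGroup Λ) :=
  {r | ∃ s t : Λ, adj s t ∧
    r = FreeGroup.of s * FreeGroup.of t * (FreeGroup.of s)⁻¹ * (FreeGroup.of t)⁻¹}

/-- The right-angled Artin group `A_M` of the right-angled Coxeter matrix with
`m_{s,t} = 2` iff `adj s t` (and `∞` otherwise): the group generated by `Λ` subject only
to the relations `st = ts` for `s`, `t` adjacent. -/
def RaagGroup (adj : Λ → Λ → Prop) : Type _ := PresentedGroup (RaagRels adj)

instance (adj : Λ → Λ → Prop) : Group (RaagGroup adj) :=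
  inferInstanceAs (Group (PresentedGroup _))

/-- The right-angled Artin monoid `A_M^+`: the monoid with the same presentation, taken
in the category of monoids. -/
def RaagMonoid (adj : Λ → Λ → Prop) : Type _ :=
  (conGen fun m n : FreeMonoid Λ => ∃ s t : Λ, adj s t ∧
    m = FreeMonoid.of s * FreeMonoid.of t ∧ n = FreeMonoid.of t * FreeMonoid.of s).Quotient

instance (adj : Λ → Λ → Prop) : Monoid (RaagMonoid adj) :=
  inferInstanceAs (Monoid (Con.Quotient _))

/-- In the right-angled Artin group, the generators at adjacent vertices commute. -/
lemma raag_of_comm (adj : Λ → Λ → Prop) {s t : Λ} (h : adj s t) :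
    (PresentedGroup.of s : RaagGroup adj) * PresentedGroup.of t =
      PresentedGroup.of t * PresentedGroup.of s := by
  have h1 : ((FreeGroup.of s * FreeGroup.of t * (FreeGroup.of s)⁻¹ * (FreeGroup.of t)⁻¹ :
      FreeGroup Λ) : FreeGroup Λ ⧸ Subgroup.normalClosure (RaagRels adj)) = 1 :=
    (QuotientGroup.eq_one_iff _).2 (Subgroup.subset_normalClosure ⟨s, t, h, rfl⟩)
  have h2 : (PresentedGroup.of s : RaagGroup adj) * PresentedGroup.of t *
      (PresentedGroup.of s)⁻¹ * (PresentedGroup.of t)⁻¹ = 1 := by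
    first
    | exact h1
    | simpa only [QuotientGroup.mk_mul, QuotientGroup.mk_inv] using h1
  calc (PresentedGroup.of s : RaagGroup adj) * PresentedGroup.of t
      = ((PresentedGroup.of s : RaagGroup adj) * PresentedGroup.of t *
          (PresentedGroup.of s)⁻¹ * (PresentedGroup.of t)⁻¹) *
          (PresentedGroup.of t * PresentedGroup.of s) := by group
    _ = PresentedGroup.of t * PresentedGroup.of s := by rw [h2]; group

/-- The canonical monoid homomorphism from the right-angled Artin monoid `A_M^+` to the
right-angled Artin group `A_M`, sending each generator to the corresponding generator. -/
def raagCanonical (adj : Λ → Λ → Prop) : RaagMonoid adj →* RaagGroup adj :=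
  Con.lift _ ((FreeMonoid.lift fun s : Λ => (PresentedGroup.of s : RaagGroup adj)))
    (Con.conGen_le.2 (by
      rintro m n ⟨s, t, h, rfl, rfl⟩
      rw [Con.ker_rel]
      simp only [map_mul, FreeMonoid.lift_eval_of]
      exact raag_of_comm adj h))

/-!
Words in the letters `s` and `s⁻¹` are taken up to swapping neighbouring letters whose
generators are adjacent (traces). Call a word reduced if no trace equivalent word contains a
factor `x x⁻¹`. Each letter acts on reduced traces by cancelling against a left divisor `x⁻¹` or
else by being prepended; these actions satisfy the defining relations, so `A_M` acts, and evaluating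
the action at the empty trace shows that reduced words with equal images in `A_M` are trace
equivalent. Positive words are reduced, which gives injectivity.

If `1` and `g` have a common upper bound, then `g = b a⁻¹` for positive words `b`, `a` without a
common right divisor. Such a word `b a⁻¹` is reduced, so its positive part `b` is determined by `g`
up to trace equivalence; comparing with any other upper bound shows that `b` is the least one.
-/

theorem isQLO_of_forall_hasUB_one {H : Type*} [Group H] {P : Submonoid H} (hP : IsPoGroup P)
    (h : ∀ g, HasUB P 1 g → ∃ m, IsLub' P 1 g m) : IsQLO P := by
  refine ⟨hP, fun x y ⟨z, hxz, hyz⟩ => ?_⟩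
  obtain ⟨m, h₁, h₂, h₃⟩ :=
    h (x⁻¹ * y) ⟨x⁻¹ * z, by simpa [lle] using hxz, by simpa [lle, mul_assoc] using hyz⟩
  refine ⟨x * m, by simpa [lle] using h₁, by simpa [lle, mul_assoc] using h₂, fun w hxw hyw => ?_⟩
  simpa [lle, mul_assoc] using
    h₃ (x⁻¹ * w) (by simpa [lle] using hxw) (by simpa [lle, mul_assoc] using hyw)

section Trace

variable {α β : Type*} (I : SimpleGraph α)

inductive TraceSwap : List α → List α → Prop
  | swap (u v : List α) {x y : α} : I.Adj x y → TraceSwap (u ++ x :: y :: v) (u ++ y :: x :: v)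

def TraceEquiv : List α → List α → Prop := Relation.EqvGen (TraceSwap I)

variable {I}

theorem TraceEquiv.refl (w : List α) : TraceEquiv I w w := Relation.EqvGen.refl w

theorem TraceEquiv.symm {w w' : List α} (h : TraceEquiv I w w') : TraceEquiv I w' w :=
  Relation.EqvGen.symm _ _ h

theorem TraceEquiv.trans {w₁ w₂ w₃ : List α} (h : TraceEquiv I w₁ w₂) (h' : TraceEquiv I w₂ w₃) :
    TraceEquiv I w₁ w₃ := Relation.EqvGen.trans _ _ _ h h'

theorem traceEquiv_swap (u v : List α) {x y : α} (h : I.Adj x y) :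
    TraceEquiv I (u ++ x :: y :: v) (u ++ y :: x :: v) :=
  Relation.EqvGen.rel _ _ (.swap u v h)

theorem TraceEquiv.rel_of_equivalence {r : List α → List α → Prop} (hr : Equivalence r)
    (hswap : ∀ u v : List α, ∀ x y, I.Adj x y → r (u ++ x :: y :: v) (u ++ y :: x :: v))
    {w w' : List α} (h : TraceEquiv I w w') : r w w' :=
  hr.eqvGen_iff.1 <| Relation.EqvGen.mono (fun _ _ ⟨u, v, hxy⟩ => hswap u v _ _ hxy) _ _ h

theorem TraceEquiv.congr_of_swap {J : SimpleGraph β} {f : List α → List β}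
    (hf : ∀ u v : List α, ∀ x y, I.Adj x y →
      TraceEquiv J (f (u ++ x :: y :: v)) (f (u ++ y :: x :: v)))
    {w w' : List α} (h : TraceEquiv I w w') : TraceEquiv J (f w) (f w') :=
  h.rel_of_equivalence (r := fun w w' => TraceEquiv J (f w) (f w'))
    ⟨fun _ => .refl _, .symm, .trans⟩ hf

theorem TraceEquiv.perm {w w' : List α} (h : TraceEquiv I w w') : w.Perm w' :=
  h.rel_of_equivalence ⟨.refl, .symm, .trans⟩ fun u _ _ _ _ => (List.Perm.swap _ _ _).append_left u

theorem TraceEquiv.mem_iff {w w' : List α} (h : TraceEquiv I w w') {x : α} : x ∈ w ↔ x ∈ w' :=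
  h.perm.mem_iff

theorem TraceEquiv.append_left {w w' : List α} (h : TraceEquiv I w w') (l : List α) :
    TraceEquiv I (l ++ w) (l ++ w') :=
  h.congr_of_swap (f := (l ++ ·)) fun u v _ _ hxy => by
    simpa using traceEquiv_swap (l ++ u) v hxy

theorem TraceEquiv.append_right {w w' : List α} (h : TraceEquiv I w w') (l : List α) :
    TraceEquiv I (w ++ l) (w' ++ l) :=
  h.congr_of_swap (f := (· ++ l)) fun u v _ _ hxy => by
    simpa using traceEquiv_swap u (v ++ l) hxy

theorem TraceEquiv.cons (x : α) {w w' : List α} (h : TraceEquiv I w w') :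
    TraceEquiv I (x :: w) (x :: w') :=
  h.append_left [x]

theorem TraceEquiv.reverse {w w' : List α} (h : TraceEquiv I w w') :
    TraceEquiv I w.reverse w'.reverse :=
  h.congr_of_swap (f := List.reverse) fun u v _ _ hxy => by
    simpa using traceEquiv_swap v.reverse u.reverse hxy.symm

theorem TraceEquiv.map {J : SimpleGraph β} (f : I →g J) {w w' : List α} (h : TraceEquiv I w w') :
    TraceEquiv J (w.map f) (w'.map f) :=
  h.congr_of_swap (f := List.map f) fun u v _ _ hxy => by
    simpa using traceEquiv_swap (u.map f) (v.map f) (f.map_adj hxy)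

theorem TraceEquiv.filter (p : α → Bool) {w w' : List α} (h : TraceEquiv I w w') :
    TraceEquiv I (w.filter p) (w'.filter p) := by
  refine h.congr_of_swap (f := List.filter p) fun u v x y hxy => ?_
  simp only [List.filter_append, List.filter_cons]
  by_cases hx : p x <;> by_cases hy : p y <;> simp only [hx, hy, if_true]
  · exact traceEquiv_swap _ _ hxy
  all_goals exact .refl _

theorem traceEquiv_cons_of_forall_adj {x : α} {u : List α} (h : ∀ b ∈ u, I.Adj x b)
    (v : List α) :
    TraceEquiv I (u ++ x :: v) (x :: (u ++ v)) := by
  induction u with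
  | nil => exact .refl _
  | cons b u ih =>
    have hu : TraceEquiv I (b :: (u ++ x :: v)) (b :: x :: (u ++ v)) :=
      (ih fun c hc => h c (by simp [hc])).cons b
    exact hu.trans (by simpa using traceEquiv_swap [] (u ++ v) (h b (by simp)).symm)

section

variable [DecidableEq α]

def pairProj (a b : α) (w : List α) : List α := w.filter fun z => z = a ∨ z = b

theorem mem_pairProj {a b x : α} {w : List α} :
    x ∈ pairProj a b w ↔ x ∈ w ∧ (x = a ∨ x = b) := by
  simp [pairProj]

theorem pairProj_append (a b : α) (u v : List α) :
    pairProj a b (u ++ v) = pairProj a b u ++ pairProj a b v :=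
  List.filter_append ..

theorem pairProj_cons_of_mem {a b x : α} (h : x = a ∨ x = b) (w : List α) :
    pairProj a b (x :: w) = x :: pairProj a b w := List.filter_cons_of_pos (by simpa using h)

theorem pairProj_cons_of_not_mem {a b x : α} (h : ¬ (x = a ∨ x = b)) (w : List α) :
    pairProj a b (x :: w) = pairProj a b w := List.filter_cons_of_neg (by simpa using h)

theorem TraceEquiv.pairProj_eq {a b : α} (hab : ¬ I.Adj a b) {w w' : List α}
    (h : TraceEquiv I w w') : pairProj a b w = pairProj a b w' := by
  refine h.rel_of_equivalence (r := fun w w' => pairProj a b w = pairProj a b w')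
    ⟨fun _ => rfl, Eq.symm, Eq.trans⟩ fun u v x y hxy => ?_
  simp only [pairProj_append]
  congr 1
  -- two kept letters would both lie in `{a, b}`, which contains no edge
  by_cases hx : x = a ∨ x = b <;> by_cases hy : y = a ∨ y = b
  · rcases hx with rfl | rfl <;> rcases hy with rfl | rfl
    exacts [absurd hxy I.irrefl, absurd hxy hab, absurd hxy.symm hab, absurd hxy I.irrefl]
  all_goals simp only [pairProj_cons_of_mem, pairProj_cons_of_not_mem, hx, hy, not_false_eq_true]

theorem pairProj_append_ne_cons {a b : α} {u : List α} (ha : a ∉ u) (hb : b ∈ u)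
    (v t : List α) : pairProj a b (u ++ v) ≠ a :: t := by
  have hbu : b ∈ pairProj a b u := mem_pairProj.2 ⟨hb, .inr rfl⟩
  obtain ⟨c, r, hcr⟩ := List.exists_cons_of_ne_nil (List.ne_nil_of_mem hbu)
  have hc : c ∈ u := (mem_pairProj.1 (hcr ▸ List.mem_cons_self : c ∈ pairProj a b u)).1
  rw [pairProj_append, hcr]
  rintro ⟨⟩
  exact ha hc

theorem pairProj_cons_cancel {a b x : α} {u v : List α}
    (h : pairProj a b (x :: u) = pairProj a b (x :: v)) : pairProj a b u = pairProj a b v := by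
  by_cases hx : x = a ∨ x = b
  · simpa [pairProj_cons_of_mem hx] using h
  · simpa [pairProj_cons_of_not_mem hx] using h

theorem traceEquiv_of_pairProj_eq : ∀ {w w' : List α},
    (∀ a b, ¬ I.Adj a b → pairProj a b w = pairProj a b w') → TraceEquiv I w w'
  | [], [], _ => .refl _
  | [], z :: w', h => absurd (h z z I.irrefl) (by simp [pairProj])
  | a :: u, w', h => by
    have ha : a ∈ w' := (mem_pairProj.1 <| (h a a I.irrefl) ▸
      (pairProj_cons_of_mem (.inl rfl) u ▸ List.mem_cons_self)).1
    obtain ⟨w₁, w₂, ha₁, rfl, -⟩ := List.exists_erase_eq ha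
    have hadj : ∀ b ∈ w₁, I.Adj a b := fun b hb => by
      by_contra hab
      exact pairProj_append_ne_cons ha₁ hb _ _
        ((h a b hab).symm.trans (pairProj_cons_of_mem (.inl rfl) u))
    have hfront := traceEquiv_cons_of_forall_adj hadj w₂
    refine ((traceEquiv_of_pairProj_eq fun b c hbc => ?_).cons a).trans hfront.symm
    exact pairProj_cons_cancel ((h b c hbc).trans (hfront.pairProj_eq hbc))

end

theorem TraceEquiv.cons_cancel {x : α} {u v : List α} (h : TraceEquiv I (x :: u) (x :: v)) :
    TraceEquiv I u v := by
  classical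
  exact traceEquiv_of_pairProj_eq fun _ _ hab => pairProj_cons_cancel (h.pairProj_eq hab)

def LeftDvd (I : SimpleGraph α) (x : α) (w : List α) : Prop := ∃ w', TraceEquiv I w (x :: w')

theorem LeftDvd.of_traceEquiv {x : α} {w w' : List α} (h : TraceEquiv I w w')
    (hd : LeftDvd I x w') : LeftDvd I x w :=
  hd.imp fun _ ht => h.trans ht

theorem LeftDvd.mem {x : α} {w : List α} (h : LeftDvd I x w) : x ∈ w :=
  h.elim fun _ ht => ht.mem_iff.2 List.mem_cons_self

theorem leftDvd_iff {x : α} {w : List α} :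
    LeftDvd I x w ↔ ∃ w₁ w₂, w = w₁ ++ x :: w₂ ∧ ∀ b ∈ w₁, I.Adj x b := by
  classical
  refine ⟨fun ⟨w', hw⟩ => ?_,
    fun ⟨w₁, w₂, hw, hadj⟩ => ⟨_, hw ▸ traceEquiv_cons_of_forall_adj hadj w₂⟩⟩
  obtain ⟨w₁, w₂, hx₁, rfl, -⟩ := List.exists_erase_eq (hw.mem_iff.2 List.mem_cons_self)
  refine ⟨w₁, w₂, rfl, fun b hb => ?_⟩
  by_contra hxb
  exact pairProj_append_ne_cons hx₁ hb _ _
    ((hw.pairProj_eq hxb).trans (pairProj_cons_of_mem (.inl rfl) w'))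

theorem LeftDvd.of_append {x : α} {t u : List α} (h : LeftDvd I x (t ++ u)) :
    LeftDvd I x t ∨ (LeftDvd I x u ∧ ∀ b ∈ t, I.Adj x b) := by
  obtain ⟨w₁, w₂, heq, hadj⟩ := leftDvd_iff.1 h
  rcases List.append_eq_append_iff.1 heq.symm with ⟨a, rfl, ha⟩ | ⟨c, rfl, hc⟩
  · cases a with
    | nil =>
      exact .inr ⟨leftDvd_iff.2 ⟨[], w₂, by simpa using ha.symm, by simp⟩, by simpa using hadj⟩
    | cons z a =>
      obtain ⟨rfl, rfl⟩ := List.cons_eq_cons.1 ha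
      exact .inl (leftDvd_iff.2 ⟨w₁, a, rfl, hadj⟩)
  · exact .inr ⟨leftDvd_iff.2 ⟨c, w₂, hc, fun b hb => hadj b (by simp [hb])⟩,
      fun b hb => hadj b (by simp [hb])⟩

theorem LeftDvd.of_cons {x y : α} {w : List α} (h : LeftDvd I x (y :: w)) :
    x = y ∨ (LeftDvd I x w ∧ I.Adj x y) := by
  rcases LeftDvd.of_append (t := [y]) h with h | ⟨h, hy⟩
  · exact .inl (List.mem_singleton.1 h.mem)
  · exact .inr ⟨h, hy y List.mem_cons_self⟩

theorem LeftDvd.cons_iff_of_adj {x y : α} {w : List α} (hxy : I.Adj x y) :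
    LeftDvd I x (y :: w) ↔ LeftDvd I x w := by
  refine ⟨fun h => (h.of_cons.resolve_left hxy.ne).1, fun ⟨t, ht⟩ => ⟨y :: t, ?_⟩⟩
  exact (ht.cons y).trans (by simpa using traceEquiv_swap [] t hxy.symm)

theorem TraceEquiv.levi : ∀ (v : List α) {t u w : List α}, TraceEquiv I (t ++ u) (v ++ w) →
    ∃ z₁ z₂ z₃ z₄ : List α, TraceEquiv I t (z₁ ++ z₂) ∧ TraceEquiv I u (z₃ ++ z₄) ∧
      TraceEquiv I v (z₁ ++ z₃) ∧ TraceEquiv I w (z₂ ++ z₄) ∧ ∀ p ∈ z₂, ∀ q ∈ z₃, I.Adj p q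
  | [], t, u, w, h => ⟨[], t, [], u, .refl _, .refl _, .refl _, by simpa using h.symm, by simp⟩
  | c :: v, t, u, w, h => by
    have hc : LeftDvd I c (t ++ u) := ⟨v ++ w, h⟩
    rcases hc.of_append with ⟨t', ht⟩ | ⟨⟨u', hu⟩, hct⟩
    · obtain ⟨z₁, z₂, z₃, z₄, h₁, h₂, h₃, h₄, h₅⟩ :=
        levi v (((ht.append_right u).symm.trans h).cons_cancel)
      exact ⟨c :: z₁, z₂, z₃, z₄, ht.trans (h₁.cons c), h₂, h₃.cons c, h₄, h₅⟩
    · have hfront := traceEquiv_cons_of_forall_adj hct u'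
      obtain ⟨z₁, z₂, z₃, z₄, h₁, h₂, h₃, h₄, h₅⟩ :=
        levi v (hfront.symm.trans ((hu.append_left t).symm.trans h)).cons_cancel
      have hcz : ∀ p ∈ z₁ ++ z₂, I.Adj c p := fun p hp => hct p (h₁.mem_iff.2 hp)
      refine ⟨z₁, z₂, c :: z₃, z₄, h₁, hu.trans (h₂.cons c), ?_, h₄, ?_⟩
      · exact (h₃.cons c).trans
          (traceEquiv_cons_of_forall_adj (fun p hp => hcz p (by simp [hp])) z₃).symm
      · rintro p hp q (_ | ⟨_, hq⟩)
        exacts [(hcz p (by simp [hp])).symm, h₅ p hp q hq]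

end Trace

section Reduced

variable {G : SimpleGraph Λ}

/-- Signed letters `(s, true) = s` and `(s, false) = s⁻¹`, as in `FreeGroup`, commute when their
underlying generators are adjacent. -/
abbrev signedGraph (G : SimpleGraph Λ) : SimpleGraph (Λ × Bool) := G.comap Prod.fst

def invLetter (x : Λ × Bool) : Λ × Bool := (x.1, !x.2)

@[simp] theorem invLetter_invLetter (x : Λ × Bool) : invLetter (invLetter x) = x := by
  simp [invLetter]

@[simp] theorem invLetter_snd (x : Λ × Bool) : (invLetter x).2 = !x.2 := rfl

def Reduced (G : SimpleGraph Λ) (w : List (Λ × Bool)) : Prop :=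
  ∀ u x v, ¬ TraceEquiv (signedGraph G) w (u ++ x :: invLetter x :: v)

theorem reduced_nil : Reduced G [] := fun u x v h => by simpa using h.perm.length_eq

theorem Reduced.of_traceEquiv {w w' : List (Λ × Bool)} (h : TraceEquiv (signedGraph G) w w')
    (hw : Reduced G w) : Reduced G w' :=
  fun u x v h' => hw u x v (h.trans h')

theorem Reduced.of_cons {x : Λ × Bool} {w : List (Λ × Bool)} (h : Reduced G (x :: w)) :
    Reduced G w :=
  fun u y v h' => h (x :: u) y v (h'.cons x)

theorem Reduced.not_leftDvd {x : Λ × Bool} {w : List (Λ × Bool)} (h : Reduced G (x :: w)) :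
    ¬ LeftDvd (signedGraph G) (invLetter x) w :=
  fun ⟨w', hw⟩ => h [] x w' (hw.cons x)

theorem Reduced.cons {x : Λ × Bool} {w : List (Λ × Bool)} (hw : Reduced G w)
    (hx : ¬ LeftDvd (signedGraph G) (invLetter x) w) : Reduced G (x :: w) := by
  intro u y v h
  -- follow the letter `x` into `u ++ y :: y⁻¹ :: v`
  rcases LeftDvd.of_append ⟨w, h.symm⟩ with ⟨u', hu⟩ | ⟨hy, hxu⟩
  · exact hw u' y v (h.trans (hu.append_right _)).cons_cancel
  have hxu' : ∀ b ∈ u, (signedGraph G).Adj (invLetter x) b := hxu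
  rcases hy.of_cons with rfl | ⟨hy, hxy⟩
  · have h' := (h.trans (traceEquiv_cons_of_forall_adj hxu _)).cons_cancel
    exact hx ⟨u ++ v, h'.trans (traceEquiv_cons_of_forall_adj hxu' v)⟩
  rcases hy.of_cons with rfl | ⟨⟨v', hv⟩, -⟩
  · exact G.irrefl (v := y.1) hxy
  have hxu'' : ∀ b ∈ u ++ [y, invLetter y], (signedGraph G).Adj x b := fun b hb => by
    simp only [List.mem_append, List.mem_cons, List.not_mem_nil, or_false] at hb
    rcases hb with hb | rfl | rfl
    exacts [hxu b hb, hxy, hxy]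
  rw [show u ++ y :: invLetter y :: v = (u ++ [y, invLetter y]) ++ v by simp] at h
  have h' :=
    (h.trans ((hv.append_left _).trans (traceEquiv_cons_of_forall_adj hxu'' v'))).cons_cancel
  exact hw u y v' (by simpa using h')

variable (G) in
def reducedSetoid : Setoid {w // Reduced G w} where
  r w w' := TraceEquiv (signedGraph G) w w'
  iseqv := ⟨fun _ => .refl _, .symm, .trans⟩

variable (G) in
def ReducedTrace : Type _ := Quotient (reducedSetoid G)

def ReducedTrace.mk {w : List (Λ × Bool)} (hw : Reduced G w) : ReducedTrace G := ⟦⟨w, hw⟩⟧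

theorem ReducedTrace.mk_eq_mk {w w' : List (Λ × Bool)} {hw : Reduced G w} {hw' : Reduced G w'}
    (h : TraceEquiv (signedGraph G) w w') : mk hw = mk hw' :=
  Quotient.sound h

theorem ReducedTrace.inductionOn {motive : ReducedTrace G → Prop} (q : ReducedTrace G)
    (mk : ∀ w (hw : Reduced G w), motive (ReducedTrace.mk hw)) : motive q :=
  Quotient.inductionOn q fun ⟨w, hw⟩ => mk w hw

theorem ReducedTrace.traceEquiv_of_mk_eq {w w' : List (Λ × Bool)} {hw : Reduced G w}
    {hw' : Reduced G w'} (h : mk hw = mk hw') : TraceEquiv (signedGraph G) w w' :=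
  Quotient.exact h

open Classical in
noncomputable def letterActRep (x : Λ × Bool) (w : {w // Reduced G w}) : ReducedTrace G :=
  if h : LeftDvd (signedGraph G) (invLetter x) w.1 then
    ReducedTrace.mk ((w.2.of_traceEquiv h.choose_spec).of_cons)
  else ReducedTrace.mk (w.2.cons h)

theorem letterActRep_of_traceEquiv {x : Λ × Bool} {w w' : List (Λ × Bool)} (hw : Reduced G w)
    (hw' : Reduced G w') (h : TraceEquiv (signedGraph G) w (invLetter x :: w')) :
    letterActRep x ⟨w, hw⟩ = ReducedTrace.mk hw' := by
  have hd : LeftDvd (signedGraph G) (invLetter x) w := ⟨w', h⟩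
  rw [letterActRep, dif_pos hd]
  exact ReducedTrace.mk_eq_mk (hd.choose_spec.symm.trans h).cons_cancel

theorem letterActRep_of_not_leftDvd {x : Λ × Bool} {w : List (Λ × Bool)} (hw : Reduced G w)
    (h : ¬ LeftDvd (signedGraph G) (invLetter x) w) :
    letterActRep x ⟨w, hw⟩ = ReducedTrace.mk (hw.cons h) := by
  rw [letterActRep, dif_neg h]

noncomputable def letterAct (x : Λ × Bool) : ReducedTrace G → ReducedTrace G :=
  Quotient.lift (letterActRep x) fun ⟨w, hw⟩ ⟨w', hw'⟩ h => by
    change TraceEquiv _ w w' at h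
    by_cases hd : LeftDvd (signedGraph G) (invLetter x) w
    · obtain ⟨c, hc⟩ := hd
      have hc' : Reduced G c := (hw.of_traceEquiv hc).of_cons
      rw [letterActRep_of_traceEquiv hw hc' hc,
        letterActRep_of_traceEquiv hw' hc' (h.symm.trans hc)]
    · have hd' : ¬ LeftDvd (signedGraph G) (invLetter x) w' := fun hd' =>
        hd (hd'.of_traceEquiv h)
      rw [letterActRep_of_not_leftDvd hw hd, letterActRep_of_not_leftDvd hw' hd']
      exact ReducedTrace.mk_eq_mk (h.cons x)

theorem letterAct_mk_of_traceEquiv {x : Λ × Bool} {w w' : List (Λ × Bool)} (hw : Reduced G w)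
    (hw' : Reduced G w') (h : TraceEquiv (signedGraph G) w (invLetter x :: w')) :
    letterAct x (ReducedTrace.mk hw) = ReducedTrace.mk hw' :=
  letterActRep_of_traceEquiv hw hw' h

theorem letterAct_mk_of_not_leftDvd {x : Λ × Bool} {w : List (Λ × Bool)} (hw : Reduced G w)
    (h : ¬ LeftDvd (signedGraph G) (invLetter x) w) :
    letterAct x (ReducedTrace.mk hw) = ReducedTrace.mk (hw.cons h) :=
  letterActRep_of_not_leftDvd hw h

theorem letterAct_mk_of_traceEquiv_cons {x : Λ × Bool} {w w' : List (Λ × Bool)}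
    (hw : Reduced G w) (hw' : Reduced G w') (h : TraceEquiv (signedGraph G) w' (x :: w)) :
    letterAct x (ReducedTrace.mk hw) = ReducedTrace.mk hw' :=
  have hd := (hw'.of_traceEquiv h).not_leftDvd
  (letterAct_mk_of_not_leftDvd hw hd).trans (ReducedTrace.mk_eq_mk h.symm)

theorem letterAct_invLetter_letterAct (x : Λ × Bool) (q : ReducedTrace G) :
    letterAct (invLetter x) (letterAct x q) = q := by
  induction q using ReducedTrace.inductionOn with | mk w hw => ?_
  by_cases hd : LeftDvd (signedGraph G) (invLetter x) w
  · obtain ⟨c, hc⟩ := hd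
    have hc' : Reduced G c := (hw.of_traceEquiv hc).of_cons
    exact (congrArg _ (letterAct_mk_of_traceEquiv hw hc' hc)).trans
      (letterAct_mk_of_traceEquiv_cons hc' hw hc)
  · refine (congrArg _ (letterAct_mk_of_not_leftDvd hw hd)).trans ?_
    exact letterAct_mk_of_traceEquiv _ hw (by simpa using .refl (x :: w))

theorem letterAct_comm_of_leftDvd {x y : Λ × Bool} (hxy : G.Adj x.1 y.1) {w : List (Λ × Bool)}
    (hw : Reduced G w) (hx : LeftDvd (signedGraph G) (invLetter x) w) :
    letterAct x (letterAct y (.mk hw)) = letterAct y (letterAct x (.mk hw)) := by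
  obtain ⟨w₁, hw₁⟩ := hx
  have hr₁ : Reduced G w₁ := (hw.of_traceEquiv hw₁).of_cons
  have hyx : (signedGraph G).Adj (invLetter y) (invLetter x) := hxy.symm
  rw [letterAct_mk_of_traceEquiv hw hr₁ hw₁]
  by_cases hy : LeftDvd (signedGraph G) (invLetter y) w₁
  · obtain ⟨m, hm⟩ := hy
    have hw' : TraceEquiv (signedGraph G) w (invLetter y :: invLetter x :: m) :=
      hw₁.trans ((hm.cons _).trans (by simpa using traceEquiv_swap [] m hyx.symm))
    have hr : Reduced G (invLetter x :: m) := (hw.of_traceEquiv hw').of_cons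
    rw [letterAct_mk_of_traceEquiv hw hr hw', letterAct_mk_of_traceEquiv hr hr.of_cons (.refl _),
      letterAct_mk_of_traceEquiv hr₁ hr.of_cons hm]
  · have hyw : ¬ LeftDvd (signedGraph G) (invLetter y) w := fun h =>
      hy ((LeftDvd.cons_iff_of_adj hyx).1 (h.of_traceEquiv hw₁.symm))
    rw [letterAct_mk_of_not_leftDvd hw hyw, letterAct_mk_of_not_leftDvd hr₁ hy]
    refine letterAct_mk_of_traceEquiv _ _ ((hw₁.cons y).trans ?_)
    simpa using traceEquiv_swap [] w₁ (show (signedGraph G).Adj y (invLetter x) from hxy.symm)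

theorem letterAct_comm {x y : Λ × Bool} (hxy : G.Adj x.1 y.1) (q : ReducedTrace G) :
    letterAct x (letterAct y q) = letterAct y (letterAct x q) := by
  induction q using ReducedTrace.inductionOn with | mk w hw => ?_
  by_cases hx : LeftDvd (signedGraph G) (invLetter x) w
  · exact letterAct_comm_of_leftDvd hxy hw hx
  by_cases hy : LeftDvd (signedGraph G) (invLetter y) w
  · exact (letterAct_comm_of_leftDvd hxy.symm hw hy).symm
  have hxy' : (signedGraph G).Adj (invLetter x) y := hxy
  have hr : Reduced G (x :: y :: w) :=
    (hw.cons hy).cons fun h => hx ((LeftDvd.cons_iff_of_adj hxy').1 h)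
  rw [letterAct_mk_of_not_leftDvd hw hy, letterAct_mk_of_not_leftDvd hw hx,
    letterAct_mk_of_traceEquiv_cons _ hr (.refl _),
    letterAct_mk_of_traceEquiv_cons _ hr (by simpa using traceEquiv_swap [] w hxy)]

noncomputable def letterPerm (x : Λ × Bool) : Equiv.Perm (ReducedTrace G) where
  toFun := letterAct x
  invFun := letterAct (invLetter x)
  left_inv := letterAct_invLetter_letterAct x
  right_inv q := by simpa using letterAct_invLetter_letterAct (invLetter x) q

end Reduced

section Group

variable {adj : Λ → Λ → Prop}

variable (adj) in
/-- `PresentedGroup.of s` has type `PresentedGroup _`, so `*`, `⁻¹` and `^` applied to it use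
instances that agree with those of `RaagGroup adj` only up to unfolding. -/
def raagGen (s : Λ) : RaagGroup adj := PresentedGroup.of s

variable (adj) in
def wordImage (w : List (Λ × Bool)) : RaagGroup adj := PresentedGroup.mk _ (FreeGroup.mk w)

@[simp] theorem wordImage_nil : wordImage adj [] = 1 := rfl

theorem wordImage_append (u v : List (Λ × Bool)) :
    wordImage adj (u ++ v) = wordImage adj u * wordImage adj v := rfl

theorem wordImage_cons (x : Λ × Bool) (w : List (Λ × Bool)) :
    wordImage adj (x :: w) = wordImage adj [x] * wordImage adj w :=
  wordImage_append [x] w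

theorem wordImage_invRev (w : List (Λ × Bool)) :
    wordImage adj (FreeGroup.invRev w) = (wordImage adj w)⁻¹ := rfl

theorem wordImage_singleton_true (s : Λ) : wordImage adj [(s, true)] = raagGen adj s := rfl

theorem wordImage_singleton_false (s : Λ) :
    wordImage adj [(s, false)] = (raagGen adj s)⁻¹ := rfl

theorem wordImage_singleton (x : Λ × Bool) :
    wordImage adj [x] = raagGen adj x.1 ^ (if x.2 then 1 else -1 : ℤ) := by
  obtain ⟨s, _ | _⟩ := x
  · simp [wordImage_singleton_false]
  · simp [wordImage_singleton_true]

theorem TraceEquiv.wordImage_eq {w w' : List (Λ × Bool)}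
    (h : TraceEquiv (signedGraph (SimpleGraph.fromRel adj)) w w') :
    wordImage adj w = wordImage adj w' := by
  refine h.rel_of_equivalence (r := fun w w' => wordImage adj w = wordImage adj w')
    ⟨fun _ => rfl, Eq.symm, Eq.trans⟩ fun u v x y hxy => ?_
  have hc : Commute (raagGen adj x.1) (raagGen adj y.1) := by
    obtain ⟨-, h | h⟩ := (SimpleGraph.fromRel_adj _ _ _).1 hxy
    exacts [raag_of_comm adj h, (raag_of_comm adj h).symm]
  have split (a b : Λ × Bool) : wordImage adj (u ++ a :: b :: v) =
      wordImage adj u * (wordImage adj [a] * wordImage adj [b]) * wordImage adj v := by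
    simp only [← wordImage_append]
    simp
  rw [split, split, wordImage_singleton x, wordImage_singleton y, (hc.zpow_zpow _ _).eq]

noncomputable def toPerm :
    RaagGroup adj →* Equiv.Perm (ReducedTrace (SimpleGraph.fromRel adj)) :=
  PresentedGroup.toGroup (f := fun s => letterPerm (s, true)) <| by
    rintro _ ⟨s, t, hst, rfl⟩
    have hc : Commute (letterPerm (G := SimpleGraph.fromRel adj) (s, true))
        (letterPerm (t, true)) := by
      by_cases h : s = t
      · exact h ▸ Commute.refl _
      · exact Equiv.ext (letterAct_comm (by simpa [SimpleGraph.fromRel_adj, h] using .inl hst))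
    simp only [map_mul, map_inv, FreeGroup.lift_apply_of]
    rw [hc.eq]
    group

theorem toPerm_of (s : Λ) : toPerm (raagGen adj s) = letterPerm (s, true) :=
  PresentedGroup.toGroup.of _

theorem toPerm_wordImage_singleton (x : Λ × Bool) :
    toPerm (wordImage adj [x]) = letterPerm x := by
  obtain ⟨s, _ | _⟩ := x
  · rw [wordImage_singleton_false, map_inv, toPerm_of]
    exact Equiv.ext fun _ => rfl
  · exact toPerm_of s

theorem toPerm_wordImage {w : List (Λ × Bool)} (hw : Reduced (SimpleGraph.fromRel adj) w) :
    toPerm (wordImage adj w) (ReducedTrace.mk reduced_nil) = ReducedTrace.mk hw := by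
  induction w with
  | nil => rfl
  | cons x w ih =>
    rw [wordImage_cons, map_mul, Equiv.Perm.mul_apply, ih hw.of_cons, toPerm_wordImage_singleton]
    exact letterAct_mk_of_traceEquiv_cons _ hw (.refl _)

theorem Reduced.traceEquiv_of_wordImage_eq {w w' : List (Λ × Bool)}
    (hw : Reduced (SimpleGraph.fromRel adj) w) (hw' : Reduced (SimpleGraph.fromRel adj) w')
    (h : wordImage adj w = wordImage adj w') :
    TraceEquiv (signedGraph (SimpleGraph.fromRel adj)) w w' :=
  ReducedTrace.traceEquiv_of_mk_eq <| (toPerm_wordImage hw).symm.trans (h ▸ toPerm_wordImage hw')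

end Group

section Positive

variable {G : SimpleGraph Λ}

def posWord (l : List Λ) : List (Λ × Bool) := l.map (·, true)

@[simp] theorem posWord_nil : posWord ([] : List Λ) = [] := rfl

@[simp] theorem posWord_append (l l' : List Λ) : posWord (l ++ l') = posWord l ++ posWord l' :=
  List.map_append ..

@[simp] theorem map_fst_posWord (l : List Λ) : (posWord l).map Prod.fst = l := by
  simp [posWord, Function.comp_def]

theorem snd_of_mem_posWord {z : Λ × Bool} {l : List Λ} (h : z ∈ posWord l) : z.2 = true := by
  obtain ⟨s, -, rfl⟩ := List.mem_map.1 h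
  rfl

theorem snd_of_mem_invRev_posWord {z : Λ × Bool} {l : List Λ}
    (h : z ∈ FreeGroup.invRev (posWord l)) : z.2 = false := by
  simp only [FreeGroup.invRev, posWord, List.map_map, List.mem_reverse, List.mem_map] at h
  obtain ⟨s, -, rfl⟩ := h
  rfl

theorem TraceEquiv.map_fst {w w' : List (Λ × Bool)} (h : TraceEquiv (signedGraph G) w w') :
    TraceEquiv G (w.map Prod.fst) (w'.map Prod.fst) :=
  h.map (SimpleGraph.Hom.comap Prod.fst G)

theorem traceEquiv_posWord_iff {l l' : List Λ} :
    TraceEquiv (signedGraph G) (posWord l) (posWord l') ↔ TraceEquiv G l l' :=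
  ⟨fun h => by simpa using h.map_fst, fun h => h.map ⟨(·, true), id⟩⟩

theorem TraceEquiv.invRev {w w' : List (Λ × Bool)} (h : TraceEquiv (signedGraph G) w w') :
    TraceEquiv (signedGraph G) (FreeGroup.invRev w) (FreeGroup.invRev w') :=
  (h.map (⟨invLetter, id⟩ : signedGraph G →g signedGraph G)).reverse

theorem reduced_posWord (l : List Λ) : Reduced G (posWord l) := fun u x v h => by
  have hx := snd_of_mem_posWord (h.mem_iff.2 (by simp : x ∈ u ++ x :: invLetter x :: v))
  have hx' :=
    snd_of_mem_posWord (h.mem_iff.2 (by simp : invLetter x ∈ u ++ x :: invLetter x :: v))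
  simp [hx] at hx'

def RightCoprime (G : SimpleGraph Λ) (b a : List Λ) : Prop :=
  ∀ s b' a', TraceEquiv G b (b' ++ [s]) → ¬ TraceEquiv G a (a' ++ [s])

theorem filter_posWord_append_invRev (b a : List Λ) :
    (posWord b ++ FreeGroup.invRev (posWord a)).filter (·.2) = posWord b := by
  rw [List.filter_append, List.filter_eq_self.2 fun z hz => by simp [snd_of_mem_posWord hz],
    List.filter_eq_nil_iff.2 fun z hz => by simp [snd_of_mem_invRev_posWord hz], List.append_nil]

theorem exists_rightCoprime (b a : List Λ) : ∃ b₀ a₀ c, RightCoprime G b₀ a₀ ∧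
    TraceEquiv G b (b₀ ++ c) ∧ TraceEquiv G a (a₀ ++ c) := by
  by_cases h : RightCoprime G b a
  · exact ⟨b, a, [], h, by simpa using .refl b, by simpa using .refl a⟩
  simp only [RightCoprime, not_forall, not_not] at h
  obtain ⟨s, b', a', hb, ha⟩ := h
  have : a'.length < a.length := by simp [ha.perm.length_eq]
  obtain ⟨b₀, a₀, c, h₀, hb₀, ha₀⟩ := exists_rightCoprime b' a'
  exact ⟨b₀, a₀, c ++ [s], h₀, by simpa using hb.trans (hb₀.append_right [s]),
    by simpa using ha.trans (ha₀.append_right [s])⟩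
termination_by a.length

theorem snd_eq_true_of_traceEquiv {b a : List Λ} {u v : List (Λ × Bool)} {x : Λ × Bool}
    (h : TraceEquiv (signedGraph G) (posWord b ++ FreeGroup.invRev (posWord a))
      (u ++ x :: invLetter x :: v)) : x.2 = true := by
  classical
  -- signs never increase along the word; projecting onto `{x, x⁻¹}` keeps this and exposes `x x⁻¹`
  have hsorted : (posWord b ++ FreeGroup.invRev (posWord a)).Pairwise
      (fun y z => z.2 = true → y.2 = true) :=
    List.pairwise_append.2
      ⟨List.pairwise_of_forall_mem_list fun y hy _ _ _ => snd_of_mem_posWord hy,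
        List.pairwise_of_forall_mem_list fun _ _ z hz hz' => by
          simp [snd_of_mem_invRev_posWord hz] at hz',
        fun y hy _ _ _ => snd_of_mem_posWord hy⟩
  have hproj := hsorted.filter (fun z => decide (z = x ∨ z = invLetter x))
  change List.Pairwise _ (pairProj x (invLetter x) _) at hproj
  have hx : ¬ (signedGraph G).Adj x (invLetter x) := G.irrefl (v := x.1)
  rw [h.pairProj_eq hx, pairProj_append, pairProj_cons_of_mem (.inl rfl),
    pairProj_cons_of_mem (.inr rfl)] at hproj
  have hx := (List.pairwise_cons.1 (List.pairwise_append.1 hproj).2.1).1 _ List.mem_cons_self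
  cases hb : x.2 <;> simp_all

theorem exists_traceEquiv_append_singleton {b a : List Λ} {u v : List (Λ × Bool)} {s : Λ}
    (h : TraceEquiv (signedGraph G) (posWord b ++ FreeGroup.invRev (posWord a))
      (u ++ (s, true) :: (s, false) :: v)) : ∃ b', TraceEquiv G b (b' ++ [s]) := by
  obtain ⟨z₁, z₂, z₃, z₄, h₁, h₂, -, h₄, -⟩ := h.levi u
  have hpos : ∀ z ∈ z₂, z.2 = true := fun z hz =>
    snd_of_mem_posWord (h₁.mem_iff.2 (by simp [hz]))
  have hneg : ∀ z ∈ z₄, z.2 = false := fun z hz =>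
    snd_of_mem_invRev_posWord (h₂.mem_iff.2 (by simp [hz]))
  -- `(s, true)` is positive, so it comes out of `z₂`; then `(s, false)` must commute past the rest
  have hd : LeftDvd (signedGraph G) (s, true) (z₂ ++ z₄) := ⟨_, h₄.symm⟩
  obtain ⟨z₂', hz₂⟩ := hd.of_append.resolve_right fun ⟨h, _⟩ => by simpa using hneg _ h.mem
  have hd' : LeftDvd (signedGraph G) (s, false) (z₂' ++ z₄) :=
    ⟨v, (h₄.trans (hz₂.append_right z₄)).cons_cancel.symm⟩
  have hadj : ∀ c ∈ z₂', (signedGraph G).Adj (s, true) c :=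
    (hd'.of_append.resolve_left fun h => by
      simpa using hpos _ (hz₂.mem_iff.2 (List.mem_cons_of_mem _ h.mem))).2
  have hb : TraceEquiv (signedGraph G) (posWord b) (z₁ ++ z₂' ++ [(s, true)]) := by
    have := (traceEquiv_cons_of_forall_adj hadj []).symm
    simpa using h₁.trans ((hz₂.trans (by simpa using this)).append_left z₁)
  refine ⟨(z₁ ++ z₂').map Prod.fst, ?_⟩
  simpa using hb.map_fst

theorem RightCoprime.reduced {b a : List Λ} (h : RightCoprime G b a) :
    Reduced G (posWord b ++ FreeGroup.invRev (posWord a)) := by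
  intro u x v hx
  obtain ⟨s, _ | _⟩ := x
  · exact absurd (snd_eq_true_of_traceEquiv hx) (by simp)
  change TraceEquiv _ _ (u ++ (s, true) :: (s, false) :: v) at hx
  obtain ⟨b', hb⟩ := exists_traceEquiv_append_singleton hx
  -- `invRev` exchanges the roles of `b` and `a`
  have e : FreeGroup.invRev (u ++ (s, true) :: (s, false) :: v) =
      FreeGroup.invRev v ++ (s, true) :: (s, false) :: FreeGroup.invRev u := by
    simp [FreeGroup.invRev]
  have hx' := hx.invRev
  rw [FreeGroup.invRev_append, FreeGroup.invRev_invRev, e] at hx'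
  obtain ⟨a', ha⟩ := exists_traceEquiv_append_singleton hx'
  exact h s b' a' hb ha

end Positive

section Cone

variable {adj : Λ → Λ → Prop}

theorem RightCoprime.traceEquiv_of_mul_inv_eq {b a b' a' : List Λ}
    (h : RightCoprime (SimpleGraph.fromRel adj) b a)
    (h' : RightCoprime (SimpleGraph.fromRel adj) b' a')
    (he : wordImage adj (posWord b) * (wordImage adj (posWord a))⁻¹ =
      wordImage adj (posWord b') * (wordImage adj (posWord a'))⁻¹) :
    TraceEquiv (SimpleGraph.fromRel adj) b b' := by
  have := (h.reduced.traceEquiv_of_wordImage_eq h'.reduced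
    (by simpa only [wordImage_append, wordImage_invRev] using he)).filter (·.2)
  rwa [filter_posWord_append_invRev, filter_posWord_append_invRev, traceEquiv_posWord_iff] at this

variable (adj) in
def raagPositiveCone : Submonoid (RaagGroup adj) := Submonoid.closure (Set.range (raagGen adj))

variable (adj) in
def raagMonoidMk (l : List Λ) : RaagMonoid adj := Quotient.mk _ (FreeMonoid.ofList l)

theorem raagMonoidMk_surjective : Function.Surjective (raagMonoidMk adj) := fun m => by
  obtain ⟨u, rfl⟩ := Quot.exists_rep m
  exact ⟨FreeMonoid.toList u, rfl⟩

theorem raagCanonical_raagMonoidMk (l : List Λ) :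
    raagCanonical adj (raagMonoidMk adj l) = wordImage adj (posWord l) := by
  change FreeMonoid.lift (raagGen adj) (FreeMonoid.ofList l) = _
  rw [FreeMonoid.lift_ofList]
  induction l with
  | nil => rfl
  | cons s l ih => rw [List.map_cons, List.prod_cons, ih]; rfl

theorem TraceEquiv.raagMonoidMk_eq {l l' : List Λ} (h : TraceEquiv (SimpleGraph.fromRel adj) l l') :
    raagMonoidMk adj l = raagMonoidMk adj l' := by
  refine h.rel_of_equivalence (r := fun l l' => raagMonoidMk adj l = raagMonoidMk adj l')
    ⟨fun _ => rfl, Eq.symm, Eq.trans⟩ fun u v x y hxy => Quotient.sound ?_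
  change ConGen.Rel _ _ _
  have split (a b : Λ) : FreeMonoid.ofList (u ++ a :: b :: v) =
      FreeMonoid.ofList u * (FreeMonoid.of a * FreeMonoid.of b) * FreeMonoid.ofList v := by
    simp [FreeMonoid.ofList_append, FreeMonoid.ofList_cons, mul_assoc]
  rw [split, split]
  refine .mul (.mul (.refl _) ?_) (.refl _)
  obtain ⟨-, h | h⟩ := (SimpleGraph.fromRel_adj _ _ _).1 hxy
  exacts [.of _ _ ⟨x, y, h, rfl, rfl⟩, .symm (.of _ _ ⟨y, x, h, rfl, rfl⟩)]

theorem raagCanonical_injective : Function.Injective (raagCanonical adj) := by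
  intro m m' h
  obtain ⟨l, rfl⟩ := raagMonoidMk_surjective m
  obtain ⟨l', rfl⟩ := raagMonoidMk_surjective m'
  rw [raagCanonical_raagMonoidMk, raagCanonical_raagMonoidMk] at h
  exact (traceEquiv_posWord_iff.1
    ((reduced_posWord l).traceEquiv_of_wordImage_eq (reduced_posWord l') h)).raagMonoidMk_eq

theorem mrange_raagCanonical : MonoidHom.mrange (raagCanonical adj) = raagPositiveCone adj :=
  (Con.lift_range _).trans (FreeMonoid.mrange_lift _)

theorem mem_raagPositiveCone {g : RaagGroup adj} :
    g ∈ raagPositiveCone adj ↔ ∃ l, wordImage adj (posWord l) = g := by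
  rw [← mrange_raagCanonical]
  refine ⟨fun ⟨m, hm⟩ => ?_,
    fun ⟨l, hl⟩ => ⟨raagMonoidMk adj l, (raagCanonical_raagMonoidMk l).trans hl⟩⟩
  obtain ⟨l, rfl⟩ := raagMonoidMk_surjective m
  exact ⟨l, (raagCanonical_raagMonoidMk l).symm.trans hm⟩

theorem isPoGroup_raagPositiveCone : IsPoGroup (raagPositiveCone adj) := by
  intro g hg hg'
  obtain ⟨l, rfl⟩ := mem_raagPositiveCone.1 hg
  obtain ⟨l', hl'⟩ := mem_raagPositiveCone.1 hg'
  have h : wordImage adj (posWord (l ++ l')) = wordImage adj [] := by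
    rw [posWord_append, wordImage_append, hl', mul_inv_cancel, wordImage_nil]
  have hl := ((reduced_posWord _).traceEquiv_of_wordImage_eq reduced_nil h).perm.length_eq
  simp [posWord] at hl
  simp [hl.1]

theorem exists_rightCoprime_of_mem {g z : RaagGroup adj} (hz : z ∈ raagPositiveCone adj)
    (hgz : g⁻¹ * z ∈ raagPositiveCone adj) : ∃ b a c, RightCoprime (SimpleGraph.fromRel adj) b a ∧
      g = wordImage adj (posWord b) * (wordImage adj (posWord a))⁻¹ ∧
      z = wordImage adj (posWord b) * wordImage adj (posWord c) := by
  obtain ⟨b₁, hb₁⟩ := mem_raagPositiveCone.1 hz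
  obtain ⟨a₁, ha₁⟩ := mem_raagPositiveCone.1 hgz
  obtain ⟨b, a, c, h, hb, ha⟩ := exists_rightCoprime (G := SimpleGraph.fromRel adj) b₁ a₁
  have hb' := (traceEquiv_posWord_iff.2 hb).wordImage_eq
  have ha' := (traceEquiv_posWord_iff.2 ha).wordImage_eq
  rw [posWord_append, wordImage_append] at hb' ha'
  refine ⟨b, a, c, h, ?_, by rw [← hb₁, hb']⟩
  calc g = z * (g⁻¹ * z)⁻¹ := by group
    _ = _ := by rw [← ha₁, ← hb₁, hb', ha']; group

theorem exists_isLub'_one {g : RaagGroup adj} (hg : HasUB (raagPositiveCone adj) 1 g) :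
    ∃ m, IsLub' (raagPositiveCone adj) 1 g m := by
  obtain ⟨z, hz, hgz⟩ := hg
  obtain ⟨b, a, -, h, rfl, -⟩ := exists_rightCoprime_of_mem (by simpa [lle] using hz) hgz
  refine ⟨wordImage adj (posWord b), by simpa [lle] using mem_raagPositiveCone.2 ⟨b, rfl⟩,
    mem_raagPositiveCone.2 ⟨a, by group⟩, fun w hw hgw => ?_⟩
  obtain ⟨b', a', c, h', hg', rfl⟩ := exists_rightCoprime_of_mem (by simpa [lle] using hw) hgw
  rw [(traceEquiv_posWord_iff.2 (h'.traceEquiv_of_mul_inv_eq h hg'.symm)).wordImage_eq]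
  exact mem_raagPositiveCone.2 ⟨c, by simp⟩

end Cone

theorem raag_monoid_embeds_and_qlo_general (adj : Λ → Λ → Prop) :
    Function.Injective (raagCanonical adj) ∧
    MonoidHom.mrange (raagCanonical adj) =
      Submonoid.closure (Set.range fun s : Λ => (PresentedGroup.of s : RaagGroup adj)) ∧
    IsQLO (Submonoid.closure
      (Set.range fun s : Λ => (PresentedGroup.of s : RaagGroup adj))) :=
  ⟨raagCanonical_injective, mrange_raagCanonical,
    isQLO_of_forall_hasUB_one isPoGroup_raagPositiveCone fun _ => exists_isLub'_one⟩

/-- For a right-angled Coxeter matrix (encoded by the simplicial graph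
`adj`), the canonical monoid homomorphism identifies the Artin monoid `A_M^+` with the
positive cone of the right-angled Artin group `A_M` (the submonoid generated by the
generators), and `(A_M, A_M^+)` is a quasi-lattice ordered group. -/
theorem raag_monoid_embeds_and_qlo (adj : Λ → Λ → Prop)
    (hsymm : Symmetric adj) (hirr : ∀ s : Λ, ¬ adj s s) :
    Function.Injective (raagCanonical adj) ∧
    MonoidHom.mrange (raagCanonical adj) =
      Submonoid.closure (Set.range fun s : Λ => (PresentedGroup.of s : RaagGroup adj)) ∧
    IsQLO (Submonoid.closure
      (Set.range fun s : Λ => (PresentedGroup.of s : RaagGroup adj))) :=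
  raag_monoid_embeds_and_qlo_general adj
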